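/- Let (p_n) ∈ SVA₊. If the weighted geometric means of a positive sequence (u_n) converge to a > 0 and (u_n/u_{n-1})^n → 1, then u_n → a. -/

import Mathlib

open Filter

noncomputable def Psum (p : ℕ → ℝ) (n : ℕ) : ℝ := ∑ k ∈ Finset.range (n + 1), p k

noncomputable def wgm (p u : ℕ → ℝ) (n : ℕ) : ℝ :=
  (∏ k ∈ Finset.range (n + 1), u k ^ p k) ^ (1 / Psum p n)

def SVA (p : ℕ → ℝ) : Prop :=
  ∀ l : ℝ, 0 < l → l ≠ 1 →
    0 < liminf (fun n : ℕ => |Psum p ⌊l * (n : ℝ)⌋₊ / Psum p n - 1|) atTop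

/-! Taking logarithms, `x n = log (u n)` has weighted means `Psum (p * x) n / Psum p n → log a`
and `n (x n - x (n - 1)) → 0`. The condition SVA at `λ = 2` gives `P (2n) ≥ (1 + c) P n`, so the
weighted mean of `x` over the block `(n, 2n]`, which is a difference quotient of the weighted means
up to `2n` and up to `n`, still tends to `log a`. On that block `x` moves by at most
`n · o(1/n) = o(1)`, so `x n` is close to its block mean. -/

open Topology

theorem abs_sum_mul_div_sum_sub_le {ι : Type*} {s : Finset ι} {w y : ι → ℝ} {x₀ δ : ℝ}
    (hw : ∀ i ∈ s, 0 ≤ w i) (hs : 0 < ∑ i ∈ s, w i) (hy : ∀ i ∈ s, |y i - x₀| ≤ δ) :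
    |(∑ i ∈ s, w i * y i) / ∑ i ∈ s, w i - x₀| ≤ δ := by
  have h := (convex_closedBall x₀ δ).centerMass_mem hw hs fun i hi =>
    mem_closedBall_iff_norm.2 (hy i hi)
  rw [mem_closedBall_iff_norm, Finset.centerMass, smul_eq_mul, inv_mul_eq_div] at h
  simpa only [smul_eq_mul, Real.norm_eq_abs] using h

theorem tendsto_sub_div_sub_of_tendsto_div {α : Type*} {l : Filter α} {a b a' b' : α → ℝ}
    {c ℓ : ℝ} (hc : 0 < c) (hb : ∀ᶠ n in l, 0 < b n) (hgap : ∀ᶠ n in l, c * b n ≤ b' n - b n)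
    (ha : Tendsto (fun n => a n / b n) l (𝓝 ℓ)) (ha' : Tendsto (fun n => a' n / b' n) l (𝓝 ℓ)) :
    Tendsto (fun n => (a' n - a n) / (b' n - b n)) l (𝓝 ℓ) := by
  have hpos : ∀ᶠ n in l, 0 < b n ∧ 0 < b' n - b n := by
    filter_upwards [hb, hgap] with n hbn hgn
    exact ⟨hbn, (mul_pos hc hbn).trans_le hgn⟩
  set r := fun n => b n / (b' n - b n)
  have hr : ∀ᶠ n in l, 0 ≤ r n ∧ r n ≤ 1 / c := by
    filter_upwards [hpos, hgap] with n ⟨hbn, hdiff⟩ hgn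
    refine ⟨by positivity, ?_⟩
    rw [div_le_div_iff₀ hdiff hc]
    linarith
  have hr_bdd : IsBoundedUnder (· ≤ ·) l ((‖·‖) ∘ r) :=
    isBoundedUnder_of_eventually_le (a := 1 / c) <| hr.mono fun n hn => by
      simpa [abs_of_nonneg hn.1] using hn.2
  have hr1_bdd : IsBoundedUnder (· ≤ ·) l ((‖·‖) ∘ (1 + r)) :=
    isBoundedUnder_of_eventually_le (a := 1 + 1 / c) <| hr.mono fun n hn => by
      simpa [abs_of_nonneg (by linarith [hn.1] : 0 ≤ 1 + r n)] using hn.2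
  -- `(a' - a) / (b' - b) - ℓ = (1 + r) (a' / b' - ℓ) - r (a / b - ℓ)`, with `r` bounded.
  have hzero : Tendsto (fun n => (1 + r n) * (a' n / b' n - ℓ) - r n * (a n / b n - ℓ)) l
      (𝓝 0) := by
    simpa using (isBoundedUnder_le_mul_tendsto_zero hr1_bdd (tendsto_sub_nhds_zero_iff.2 ha')).sub
      (isBoundedUnder_le_mul_tendsto_zero hr_bdd (tendsto_sub_nhds_zero_iff.2 ha))
  refine tendsto_sub_nhds_zero_iff.1 (hzero.congr' ?_)
  filter_upwards [hpos] with n ⟨hbn, hdiff⟩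
  have hb' : 0 < b' n := by linarith
  simp only [r]
  field_simp
  ring

theorem eventually_forall_abs_sub_le_of_tendsto_mul_sub {x : ℕ → ℝ}
    (hx : Tendsto (fun n : ℕ => (n : ℝ) * (x n - x (n - 1))) atTop (𝓝 0)) {ε : ℝ} (hε : 0 < ε) :
    ∀ᶠ n in atTop, ∀ k ∈ Finset.Icc n (2 * n), |x k - x n| ≤ ε := by
  obtain ⟨N, hN⟩ := eventually_atTop.1 (hx.abs.eventually (gt_mem_nhds (by simpa using hε)))
  filter_upwards [eventually_ge_atTop N] with n hn k hk
  obtain ⟨hnk, hk2⟩ := Finset.mem_Icc.1 hk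
  have hstep : ∀ i ∈ Finset.Ico n k, dist (x i) (x (i + 1)) ≤ ε / (n + 1) := by
    intro i hi
    have hi' := (Finset.mem_Ico.1 hi).1
    have h := hN (i + 1) (by omega)
    rw [Nat.add_sub_cancel, abs_mul, Nat.abs_cast] at h
    rw [dist_comm, Real.dist_eq, le_div_iff₀ (by positivity)]
    have : (n : ℝ) + 1 ≤ ((i + 1 : ℕ) : ℝ) := by exact_mod_cast Nat.succ_le_succ hi'
    nlinarith [abs_nonneg (x (i + 1) - x i)]
  calc |x k - x n| = dist (x n) (x k) := by rw [dist_comm, Real.dist_eq]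
    _ ≤ ∑ i ∈ Finset.Ico n k, dist (x i) (x (i + 1)) := dist_le_Ico_sum_dist x hnk
    _ ≤ (k - n : ℕ) • (ε / (n + 1)) := by simpa using Finset.sum_le_card_nsmul _ _ _ hstep
    _ ≤ n * (ε / (n + 1)) := by
      rw [nsmul_eq_mul]
      gcongr
      exact_mod_cast (by omega : k - n ≤ n)
    _ ≤ ε := by
      rw [mul_div_assoc', div_le_iff₀ (by positivity)]
      linarith

theorem Psum_pos {p : ℕ → ℝ} (hp : ∀ n, 0 ≤ p n) (hp0 : 0 < p 0) (n : ℕ) : 0 < Psum p n :=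
  hp0.trans_le <| Finset.single_le_sum (fun k _ => hp k) (Finset.mem_range.2 n.succ_pos)

theorem Psum_mono {p : ℕ → ℝ} (hp : ∀ n, 0 ≤ p n) : Monotone (Psum p) := fun _ _ h =>
  Finset.sum_le_sum_of_subset_of_nonneg (Finset.range_subset_range.2 (by omega)) fun k _ _ => hp k

theorem Psum_sub_Psum {p : ℕ → ℝ} {m n : ℕ} (h : m ≤ n) :
    Psum p n - Psum p m = ∑ k ∈ Finset.Ico (m + 1) (n + 1), p k :=
  (Finset.sum_Ico_eq_sub p (by omega)).symm

theorem SVA.exists_pos_mul_le_Psum_two_mul_sub {p : ℕ → ℝ} (hSVA : SVA p) (hp : ∀ n, 0 ≤ p n)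
    (hp0 : 0 < p 0) : ∃ c > 0, ∀ᶠ n in atTop, c * Psum p n ≤ Psum p (2 * n) - Psum p n := by
  set c := liminf (fun n : ℕ => |Psum p ⌊(2 : ℝ) * n⌋₊ / Psum p n - 1|) atTop
  have hc : 0 < c := hSVA 2 two_pos (by norm_num)
  refine ⟨c / 2, half_pos hc, ?_⟩
  filter_upwards [eventually_lt_of_lt_liminf (half_lt_self hc)
    (isBoundedUnder_of ⟨0, fun n => abs_nonneg _⟩)] with n hn
  have hfloor : ⌊(2 : ℝ) * n⌋₊ = 2 * n := by exact_mod_cast Nat.floor_natCast (2 * n)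
  have hPn := Psum_pos hp hp0 n
  have hratio : 1 ≤ Psum p (2 * n) / Psum p n := (one_le_div hPn).2 (Psum_mono hp (by omega))
  rw [hfloor, abs_of_nonneg (sub_nonneg.2 hratio), lt_sub_iff_add_lt, lt_div_iff₀ hPn] at hn
  linarith

theorem log_wgm {p u : ℕ → ℝ} (hu : ∀ n, 0 < u n) (n : ℕ) :
    Real.log (wgm p u n) = Psum (fun k => p k * Real.log (u k)) n / Psum p n := by
  rw [wgm, Real.log_rpow (Finset.prod_pos fun k _ => Real.rpow_pos_of_pos (hu k) _),
    Real.log_prod fun k _ => (Real.rpow_pos_of_pos (hu k) _).ne', one_div_mul_eq_div]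
  exact congrArg (· / _) (Finset.sum_congr rfl fun k _ => Real.log_rpow (hu k) (p k))

theorem tendsto_of_tendsto_weightedMean {p x : ℕ → ℝ} {c ℓ : ℝ} (hp : ∀ n, 0 ≤ p n)
    (hP : ∀ n, 0 < Psum p n) (hc : 0 < c)
    (hgap : ∀ᶠ n in atTop, c * Psum p n ≤ Psum p (2 * n) - Psum p n)
    (hmean : Tendsto (fun n => Psum (fun k => p k * x k) n / Psum p n) atTop (𝓝 ℓ))
    (hx : Tendsto (fun n : ℕ => (n : ℝ) * (x n - x (n - 1))) atTop (𝓝 0)) :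
    Tendsto x atTop (𝓝 ℓ) := by
  set m := fun n => (Psum (fun k => p k * x k) (2 * n) - Psum (fun k => p k * x k) n) /
    (Psum p (2 * n) - Psum p n)
  have hm : Tendsto m atTop (𝓝 ℓ) :=
    tendsto_sub_div_sub_of_tendsto_div hc (.of_forall hP) hgap hmean
      (hmean.comp (tendsto_id.const_mul_atTop' two_pos))
  have hclose : Tendsto (fun n => m n - x n) atTop (𝓝 0) := by
    refine Metric.tendsto_nhds.2 fun ε hε => ?_
    filter_upwards [hgap, eventually_forall_abs_sub_le_of_tendsto_mul_sub hx (half_pos hε)]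
      with n hgn hosc
    have hle : n ≤ 2 * n := by omega
    have hblock : 0 < Psum p (2 * n) - Psum p n := (mul_pos hc (hP n)).trans_le hgn
    rw [Psum_sub_Psum hle] at hblock
    rw [Real.dist_eq, sub_zero]
    simp only [m]
    rw [Psum_sub_Psum hle, Psum_sub_Psum hle]
    refine (abs_sum_mul_div_sum_sub_le (fun k _ => hp k) hblock fun k hk => hosc k ?_).trans_lt
      (half_lt_self hε)
    simp only [Finset.mem_Ico, Finset.mem_Icc] at hk ⊢
    omega
  simpa using hm.sub hclose

theorem landau_tauberian_general (p u : ℕ → ℝ) (a : ℝ)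
    (hp : ∀ n, 0 ≤ p n) (hp0 : 0 < p 0)
    (hSVA : SVA p)
    (hu : ∀ n, 0 < u n) (ha : 0 < a)
    (hw : Tendsto (wgm p u) atTop (nhds a))
    (hd : Tendsto (fun n : ℕ => (u n / u (n - 1)) ^ n) atTop (nhds 1)) :
    Tendsto u atTop (nhds a) := by
  obtain ⟨c, hc, hgap⟩ := hSVA.exists_pos_mul_le_Psum_two_mul_sub hp hp0
  have hmean := (Real.continuousAt_log ha.ne').tendsto.comp hw
  have hdiff := (Real.continuousAt_log one_ne_zero).tendsto.comp hd
  simp only [Function.comp_def, log_wgm hu] at hmean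
  simp only [Function.comp_def, Real.log_one, Real.log_pow,
    Real.log_div (hu _).ne' (hu _).ne'] at hdiff
  have hlog := tendsto_of_tendsto_weightedMean hp (Psum_pos hp hp0) hc hgap hmean hdiff
  simpa only [Function.comp_def, Real.exp_log (hu _), Real.exp_log ha] using
    (Real.continuous_exp.tendsto _).comp hlog

theorem landau_tauberian (p u : ℕ → ℝ) (a : ℝ)
    (hp : ∀ n, 0 ≤ p n) (hp0 : 0 < p 0)
    (hP : Tendsto (Psum p) atTop atTop) (hSVA : SVA p)
    (hu : ∀ n, 0 < u n) (ha : 0 < a)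
    (hw : Tendsto (wgm p u) atTop (nhds a))
    (hd : Tendsto (fun n : ℕ => (u n / u (n - 1)) ^ n) atTop (nhds 1)) :
    Tendsto u atTop (nhds a) :=
  landau_tauberian_general p u a hp hp0 hSVA hu ha hw hd
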